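/- Let G be a simple graph on n ≥ 2 vertices with vertex set V. Then there exists a 2-11-representant w of G such that (a) w is a concatenation of at most n² − n + 2 permutations of V, and (b) for every vertex i ∈ V, at least one of the permutations in this concatenation has i as its first letter. In particular, every simple graph is permutationally 2-11-representable. -/

import Mathlib

/-- Number of occurrences of the consecutive pattern 11 in a word,
i.e. the number of positions `i` with `u i = u (i+1)`. -/
def pattern11Count {V : Type*} [DecidableEq V] (u : List V) : ℕ :=
  (u.zip u.tail).countP (fun p => decide (p.1 = p.2))

/-- `w` is a `k`-11-representant of the simple graph `G`: every vertex occurs in `w`,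
and two distinct vertices are adjacent iff the subword of `w` induced by them contains
at most `k` occurrences of the consecutive pattern 11. -/
def IsK11Rep {V : Type*} [DecidableEq V] (G : SimpleGraph V) (k : ℕ) (w : List V) : Prop :=
  (∀ v : V, v ∈ w) ∧
  ∀ x y : V, x ≠ y →
    (G.Adj x y ↔ pattern11Count (w.filter (fun a => decide (a = x ∨ a = y))) ≤ k)

/-- A simple graph is `k`-11-representable if it has a `k`-11-representant. -/
def K11Representable {V : Type*} [DecidableEq V] (G : SimpleGraph V) (k : ℕ) : Prop :=
  ∃ w : List V, IsK11Rep G k w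

/-- A graph is `t`-uniformly `k`-11-representable if it has a `k`-11-representant in which
every vertex occurs exactly `t` times. -/
def UniformK11Rep {V : Type*} [DecidableEq V] (G : SimpleGraph V) (t k : ℕ) : Prop :=
  ∃ w : List V, IsK11Rep G k w ∧ ∀ v : V, w.count v = t

/-- The final permutation `σ(w)`: distinct letters of `w` in order of last occurrence. -/
def finalPerm {V : Type*} [DecidableEq V] (w : List V) : List V := w.dedup

/-- The initial permutation `π(w)`: distinct letters of `w` in order of first occurrence. -/
def initPerm {V : Type*} [DecidableEq V] (w : List V) : List V := (w.reverse.dedup).reverse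

/-
Label the vertices `0, …, n-1` and let `ρᵢ = i, i+1, …, n-1, 0, …, i-1`. In a concatenation of
permutations the subword induced by a pair `{a, b}` is a sequence of blocks `ab` and `ba`, and
its number of 11-patterns is the number of switches of orientation between consecutive blocks.
In `ρ₀ ρ₁ ⋯ ρₙ₋₁` a pair `a < b` switches at `ρ_{a+1}` and, if `b < n-1`, at `ρ_{b+1}`.
For every non-neighbour `b > a` insert after `ρₐ`, in increasing order of `b`, the two
permutations in which `a` stands just after and just before `b`: this adds two switches for
`{a, b}` and none for any other pair, so non-adjacent pairs switch at least three times.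
When `a ≠ 0` and `a + 1` is a non-neighbour of `a`, the second permutation inserted for `a + 1`
is `ρₐ` itself, so `ρₐ` can be dropped; this keeps the number of permutations at most
`n² - n + 2`.
-/

section

variable {α β : Type*} [DecidableEq α] [DecidableEq β]

theorem pattern11Count_singleton (a : α) : pattern11Count [a] = 0 := rfl

theorem pattern11Count_cons_cons (a b : α) (l : List α) :
    pattern11Count (a :: b :: l) = (if a = b then 1 else 0) + pattern11Count (b :: l) := by
  simp only [pattern11Count, List.tail_cons, List.zip_cons_cons, List.countP_cons,
    decide_eq_true_eq]
  omega

theorem pattern11Count_map {f : α → β} {l : List α} (hf : Set.InjOn f {a | a ∈ l}) :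
    pattern11Count (l.map f) = pattern11Count l := by
  rw [pattern11Count, pattern11Count, ← List.map_tail, List.zip_map, List.countP_map]
  refine List.countP_congr fun ⟨x, y⟩ hxy => ?_
  have hx := List.of_mem_zip hxy
  simpa using hf.eq_iff hx.1 (List.mem_of_mem_tail hx.2)

theorem filter_map_eq_or_eq {f : α → β} {s : Set α} (hf : Set.InjOn f s) {w : List α}
    (hw : ∀ a ∈ w, a ∈ s) {x y : α} (hx : x ∈ s) (hy : y ∈ s) :
    (w.map f).filter (fun z => decide (z = f x ∨ z = f y)) =
      (w.filter fun z => decide (z = x ∨ z = y)).map f := by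
  rw [List.filter_map]
  congr 1
  refine List.filter_congr fun z hz => ?_
  simp [hf.eq_iff (hw z hz) hx, hf.eq_iff (hw z hz) hy]

theorem isK11Rep_map_of_bijOn {f : α → β} {s : Set α} (hf : Set.BijOn f s Set.univ)
    {G : SimpleGraph β} {k : ℕ} {w : List α} (hw : ∀ a, a ∈ w ↔ a ∈ s)
    (h : ∀ x ∈ s, ∀ y ∈ s, x ≠ y →
      (G.Adj (f x) (f y) ↔ pattern11Count (w.filter fun z => decide (z = x ∨ z = y)) ≤ k)) :
    IsK11Rep G k (w.map f) := by
  refine ⟨fun v => ?_, fun u v huv => ?_⟩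
  · obtain ⟨a, ha, rfl⟩ := hf.surjOn (Set.mem_univ v)
    exact List.mem_map_of_mem ((hw a).2 ha)
  · obtain ⟨x, hx, rfl⟩ := hf.surjOn (Set.mem_univ u)
    obtain ⟨y, hy, rfl⟩ := hf.surjOn (Set.mem_univ v)
    rw [filter_map_eq_or_eq hf.injOn (fun a => (hw a).1) hx hy,
      pattern11Count_map (hf.injOn.mono fun a ha => (hw a).1 (List.mem_of_mem_filter ha))]
    exact h x hx y hy fun hxy => huv (congrArg f hxy)

theorem count_map_eq_one_of_perm_range {f : ℕ → β} {n : ℕ}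
    (hf : Set.BijOn f (Set.Iio n) Set.univ) {p : List ℕ} (hp : p.Perm (List.range n)) (v : β) :
    (p.map f).count v = 1 := by
  rw [(hp.map f).count_eq]
  obtain ⟨a, ha, rfl⟩ := hf.surjOn (Set.mem_univ v)
  refine List.count_eq_one_of_mem ((List.nodup_range).map_on fun x hx y hy => ?_)
    (List.mem_map_of_mem (List.mem_range.2 ha))
  exact hf.injOn (List.mem_range.1 hx) (List.mem_range.1 hy)

end

def switches : List Bool → ℕ
  | a :: b :: l => (if a = b then 0 else 1) + switches (b :: l)
  | _ => 0

@[simp] theorem switches_singleton (a : Bool) : switches [a] = 0 := rfl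

@[simp] theorem switches_cons_cons (a b : Bool) (l : List Bool) :
    switches (a :: b :: l) = (if a = b then 0 else 1) + switches (b :: l) := rfl

theorem switches_replicate_append (k : ℕ) (c : Bool) (l : List Bool) :
    switches (List.replicate (k + 1) c ++ l) = switches (c :: l) := by
  induction k with
  | zero => rfl
  | succ k ih => simpa [List.replicate_succ] using ih

theorem switches_cons_replicate_append (a : Bool) (k : ℕ) (c : Bool) (l : List Bool) :
    switches (a :: (List.replicate (k + 1) c ++ l)) =
      (if a = c then 0 else 1) + switches (c :: l) := by
  rw [← switches_replicate_append k c l]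
  rfl

theorem switches_cons_replicate (a : Bool) (k : ℕ) (c : Bool) :
    switches (a :: List.replicate (k + 1) c) = if a = c then 0 else 1 := by
  simpa using switches_cons_replicate_append a k c []

theorem switches_shape (P : Prop) [Decidable P] {A B C : List Bool}
    (hA : A ≠ []) (hA' : ∀ x ∈ A, x = true) (hB : B ≠ []) (hB' : ∀ x ∈ B, x = false)
    (hC : ∀ x ∈ C, x = true) :
    switches (A ++ (if P then [] else [false, true]) ++ B ++ C) =
      (if P then 1 else 3) + (if C = [] then 0 else 1) := by
  obtain ⟨x, rfl⟩ : ∃ x, A = List.replicate (x + 1) true :=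
    ⟨A.length - 1, List.eq_replicate_iff.2 ⟨by grind [List.length_pos_iff], hA'⟩⟩
  obtain ⟨y, rfl⟩ : ∃ y, B = List.replicate (y + 1) false :=
    ⟨B.length - 1, List.eq_replicate_iff.2 ⟨by grind [List.length_pos_iff], hB'⟩⟩
  obtain ⟨_ | z, rfl⟩ : ∃ z, C = List.replicate z true := ⟨_, List.eq_replicate_of_mem hC⟩ <;>
    split_ifs <;> simp_all [switches_replicate_append, switches_cons_replicate_append,
      switches_cons_replicate]

def pairWord {α : Type*} (x y : α) (c : Bool) : List α := if c then [x, y] else [y, x]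

theorem pattern11Count_flatMap_pairWord {α : Type*} [DecidableEq α] {x y : α} (hxy : x ≠ y) :
    ∀ bl : List Bool, pattern11Count (bl.flatMap (pairWord x y)) = switches bl
  | [] => rfl
  | [c] => by
    cases c <;> simp [pairWord, pattern11Count_cons_cons, hxy, hxy.symm, pattern11Count_singleton]
  | c :: c' :: t => by
    have ih := pattern11Count_flatMap_pairWord hxy (c' :: t)
    simp only [List.flatMap_cons] at ih ⊢
    cases c <;> cases c' <;>
      simp_all [pairWord, pattern11Count_cons_cons, switches, Ne.symm hxy]

theorem filter_range'_eq_or_eq {a b : ℕ} (hab : a < b) (u k : ℕ) :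
    (List.range' u k).filter (fun z => decide (z = a ∨ z = b)) =
      (if u ≤ a ∧ a < u + k then [a] else []) ++ (if u ≤ b ∧ b < u + k then [b] else []) := by
  induction k generalizing u with
  | zero => simp
  | succ k ih =>
    rw [List.range'_succ, List.filter_cons, ih]
    split_ifs <;> simp_all <;> omega

theorem length_flatMap_ite_le {α β : Type*} (P : α → Prop) [DecidablePred P] (f g : α → β)
    (l : List α) :
    (l.flatMap fun b => if P b then [] else [f b, g b]).length ≤ 2 * l.length := by
  rw [List.length_flatMap, mul_comm, ← smul_eq_mul, ← List.length_map (f := fun b => _)]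
  refine List.sum_le_card_nsmul _ _ fun x hx => ?_
  obtain ⟨b, -, rfl⟩ := List.mem_map.1 hx
  split_ifs <;> simp

theorem range'_eq_append_cons {s k m : ℕ} (h : m < k) :
    List.range' s k = List.range' s m ++ (s + m) :: List.range' (s + m + 1) (k - m - 1) := by
  rw [← List.range'_succ, List.range'_append_1]
  congr 1; omega

theorem exists_bijOn_Iio_card (V : Type*) [Fintype V] [Nonempty V] :
    ∃ f : ℕ → V, Set.BijOn f (Set.Iio (Fintype.card V)) Set.univ := by
  classical
  let e := Fintype.equivFin V
  refine ⟨fun j => if h : j < Fintype.card V then e.symm ⟨j, h⟩ else Classical.arbitrary V,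
    fun _ _ => trivial, fun x hx y hy hxy => ?_, fun v _ => ⟨e v, (e v).isLt, by simp⟩⟩
  simp only [Set.mem_Iio] at hx hy
  simpa [hx, hy] using hxy

namespace TwoElevenRep

/-- `rotInsert n i p` is `i+1, …, n-1, 0, …, i-1` with `i` inserted at position `p`. -/
def rotInsert (n i p : ℕ) : List ℕ :=
  List.range' (i + 1) p ++ i :: (List.range' (i + 1 + p) (n - 1 - i - p) ++ List.range i)

/-- Whether `a` precedes `b` in `rotInsert n i p`, for `a < b < n`. -/
def orient (a b i p : ℕ) : Bool :=
  if i = a then decide (p < b - a) else decide (i ≤ a ∨ b < i)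

theorem filter_rotInsert {n a b i p : ℕ} (hab : a < b) (hbn : b < n) :
    (rotInsert n i p).filter (fun z => decide (z = a ∨ z = b)) =
      pairWord a b (orient a b i p) := by
  rw [rotInsert, List.range_eq_range', List.filter_append, List.filter_cons, List.filter_append,
    filter_range'_eq_or_eq hab, filter_range'_eq_or_eq hab, filter_range'_eq_or_eq hab, orient,
    pairWord]
  split_ifs <;> simp only [decide_eq_true_eq] at * <;> first | omega | simp_all

theorem rotInsert_zero (n i : ℕ) :
    rotInsert n i 0 = i :: (List.range' (i + 1) (n - 1 - i) ++ List.range i) := by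
  simp [rotInsert]

theorem rotInsert_perm_range {n i p : ℕ} (hp : i + p < n) :
    (rotInsert n i p).Perm (List.range n) := by
  obtain ⟨m, rfl⟩ : ∃ m, n = i + 1 + p + m := ⟨n - 1 - i - p, by omega⟩
  have hsplit : List.range (i + 1 + p + m) =
      List.range i ++ i :: (List.range' (i + 1) p ++ List.range' (i + 1 + p) m) := by
    rw [List.range'_append_1, ← List.range'_succ, List.range_eq_range', List.range_eq_range',
      show i + 1 + p + m = i + (p + m + 1) by omega, ← List.range'_append_1, Nat.zero_add]
  rw [hsplit, rotInsert, show i + 1 + p + m - 1 - i - p = m by omega]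
  refine List.perm_middle.trans ((List.Perm.cons _ ?_).trans List.perm_middle.symm)
  rw [← List.append_assoc]
  exact List.perm_append_comm

variable (H : SimpleGraph ℕ) [DecidableRel H.Adj] (n : ℕ)

/-- The insertion positions of the permutations contributed by the vertex `i`: the positions
`b - i` and `b - i - 1` put `i` just after and just before the non-neighbour `b`. -/
def stops (i : ℕ) : List ℕ :=
  (if 0 < i ∧ i + 1 < n ∧ ¬ H.Adj i (i + 1) then [] else [0]) ++
    (List.range' (i + 1) (n - 1 - i)).flatMap fun b =>
      if H.Adj i b then [] else [b - i, b - i - 1]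

def permList : List (List ℕ) :=
  (List.range n).flatMap fun i => (stops H n i).map (rotInsert n i)

def orientSeq (a b : ℕ) : List Bool :=
  (List.range n).flatMap fun i => (stops H n i).map (orient a b i)

variable {H n}

theorem le_of_mem_stops {i p : ℕ} (h : p ∈ stops H n i) : p ≤ n - 1 - i := by
  simp only [stops, List.mem_append, List.mem_flatMap, List.mem_range'_1] at h
  rcases h with h | ⟨b, hb, h⟩
  · split_ifs at h <;> simp_all
  · split_ifs at h <;> simp at h; omega

theorem zero_mem_stops (i : ℕ) : 0 ∈ stops H n i := by
  unfold stops
  split_ifs with h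
  · refine List.mem_append_right _ (List.mem_flatMap.2 ⟨i + 1, ?_, by simp [h.2.2]⟩)
    simp only [List.mem_range'_1]; omega
  · simp

theorem length_stops_le {i : ℕ} (hi : i < n) :
    (stops H n i).length ≤
      2 * (n - 1 - i) + (if i = 0 then 1 else 0) + (if i = n - 1 then 1 else 0) := by
  rcases Nat.lt_or_ge (i + 1) n with h | h
  · have hrest := length_flatMap_ite_le (H.Adj i) (fun b => b - i) (fun b => b - i - 1)
      (List.range' (i + 1 + 1) (n - 2 - i))
    rw [List.length_range'] at hrest
    rw [stops, show n - 1 - i = (n - 2 - i) + 1 by omega, List.range'_succ, List.flatMap_cons,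
      List.length_append, List.length_append]
    generalize (List.flatMap _ _).length = r at hrest ⊢
    simp only [apply_ite List.length, List.length_nil, List.length_cons]
    by_cases hadj : H.Adj i (i + 1) <;> simp only [hadj, if_true, if_false, not_true_eq_false,
      not_false_eq_true, and_false, and_true] <;> split_ifs <;> omega
  · rw [stops, show n - 1 - i = 0 by omega, List.range'_zero, List.flatMap_nil, List.append_nil]
    split_ifs <;> simp; omega

theorem length_permList_le (hn : 2 ≤ n) : (permList H n).length ≤ n ^ 2 + 2 - n := by
  have hsum : (permList H n).length = ∑ i ∈ Finset.range n, (stops H n i).length := by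
    rw [permList, List.length_flatMap, Finset.sum_eq_multiset_sum]
    simp only [List.length_map]
    rfl
  have hgauss : ∑ i ∈ Finset.range n, 2 * (n - 1 - i) = n * (n - 1) := by
    have hreflect := Finset.sum_range_reflect (fun j => j) n
    rw [← Finset.mul_sum, hreflect, mul_comm, Finset.sum_range_id_mul_two]
  have hle : (permList H n).length ≤ n * (n - 1) + 1 + 1 := by
    rw [hsum, ← hgauss]
    refine (Finset.sum_le_sum fun i hi => length_stops_le (Finset.mem_range.1 hi)).trans_eq ?_
    simp only [Finset.sum_add_distrib, Finset.sum_ite_eq', Finset.mem_range]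
    split_ifs <;> omega
  have : n * (n - 1) = n ^ 2 - n := by rw [Nat.mul_sub_one, sq]
  have : n ≤ n ^ 2 := Nat.le_self_pow (by omega) n
  omega

variable {a b : ℕ}

theorem exists_map_stops_lt_eq (hab : a < b) (hbn : b < n) :
    ∃ A B : List Bool, (stops H n a).map (fun p => decide (p < b - a)) =
        A ++ (if H.Adj a b then [] else [false, true]) ++ B ∧
      (∀ x ∈ A, x = true) ∧ (a = 0 → A ≠ []) ∧ ∀ x ∈ B, x = false := by
  set g : ℕ → List ℕ := fun c => if H.Adj a c then [] else [c - a, c - a - 1] with hg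
  set I₀ : List ℕ := if 0 < a ∧ a + 1 < n ∧ ¬ H.Adj a (a + 1) then [] else [0] with hI₀
  have hstops : stops H n a = I₀ ++ ((List.range' (a + 1) (b - a - 1)).flatMap g ++
      (g b ++ (List.range' (b + 1) (n - 1 - b)).flatMap g)) := by
    have hsplit := range'_eq_append_cons (s := a + 1) (k := n - 1 - a) (m := b - a - 1) (by omega)
    rw [show a + 1 + (b - a - 1) = b by omega,
      show n - 1 - a - (b - a - 1) - 1 = n - 1 - b by omega] at hsplit
    rw [stops, hsplit, List.flatMap_append, List.flatMap_cons]
  refine ⟨(I₀ ++ (List.range' (a + 1) (b - a - 1)).flatMap g).map (fun p => decide (p < b - a)),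
    ((List.range' (b + 1) (n - 1 - b)).flatMap g).map (fun p => decide (p < b - a)),
    ?_, ?_, ?_, ?_⟩
  · have hmid : (g b).map (fun p => decide (p < b - a)) =
        if H.Adj a b then [] else [false, true] := by
      simp only [hg]
      split_ifs <;> simp; omega
    rw [hstops]
    simp only [List.map_append, hmid, List.append_assoc]
  · simp only [List.mem_map, List.mem_append, List.mem_flatMap, List.mem_range'_1, hI₀, hg]
    rintro x ⟨p, hp | ⟨c, hc, hp⟩, rfl⟩ <;> split_ifs at hp <;> simp at hp ⊢ <;> omega
  · rintro rfl; simp [hI₀]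
  · simp only [List.mem_map, List.mem_flatMap, List.mem_range'_1, hg]
    rintro x ⟨p, ⟨c, hc, hp⟩, rfl⟩
    split_ifs at hp <;> simp at hp ⊢; omega

theorem switches_orientSeq (hab : a < b) (hbn : b < n) :
    switches (orientSeq H n a b) =
      (if H.Adj a b then 1 else 3) + (if b = n - 1 then 0 else 1) := by
  obtain ⟨A, B, hAB, hA, hA0, hB⟩ := exists_map_stops_lt_eq (H := H) hab hbn
  set F : ℕ → List Bool := fun i => (stops H n i).map (orient a b i) with hF
  have hFa : (stops H n a).map (orient a b a) =
      A ++ (if H.Adj a b then [] else [false, true]) ++ B := by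
    rw [← hAB]; simp [orient]
  have hne : ∀ i, F i ≠ [] := fun i => List.ne_nil_of_mem (List.mem_map_of_mem (zero_mem_stops i))
  have hnil : ∀ l : List ℕ, l.flatMap F = [] ↔ l = [] := fun l =>
    ⟨fun h => List.eq_nil_iff_forall_not_mem.2 fun i hi =>
      hne i (List.flatMap_eq_nil_iff.1 h i hi), by rintro rfl; rfl⟩
  have hconst : ∀ (l : List ℕ) (c : Bool), (∀ i ∈ l, i ≠ a ∧ decide (i ≤ a ∨ b < i) = c) →
      ∀ x ∈ l.flatMap F, x = c := by
    intro l c hl x hx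
    obtain ⟨i, hi, p, -, rfl⟩ : ∃ i ∈ l, ∃ p ∈ stops H n i, orient a b i p = x := by
      simpa [hF] using hx
    rw [orient, if_neg (hl i hi).1, (hl i hi).2]
  have hsplit : List.range n = List.range a ++
      a :: (List.range' (a + 1) (b - a) ++ List.range' (b + 1) (n - 1 - b)) := by
    rw [List.range_eq_range', List.range_eq_range', range'_eq_append_cons (m := a) (by omega),
      Nat.zero_add, show b + 1 = a + 1 + (b - a) by omega, List.range'_append_1]
    congr 3; omega
  have hshape := switches_shape (H.Adj a b) (A := (List.range a).flatMap F ++ A)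
    (B := B ++ (List.range' (a + 1) (b - a)).flatMap F)
    (C := (List.range' (b + 1) (n - 1 - b)).flatMap F) ?_ ?_ ?_ ?_ ?_
  · rw [orientSeq, hsplit]
    simp only [List.flatMap_append, List.flatMap_cons, hFa, List.append_assoc] at hshape ⊢
    rw [hshape]
    congr 1
    by_cases hb : b = n - 1
    · rw [if_pos hb, if_pos ((hnil _).2 (List.range'_eq_nil_iff.2 (by omega)))]
    · rw [if_neg hb, if_neg (mt (hnil _).1 (mt List.range'_eq_nil_iff.1 (by omega)))]
  · rw [Ne, List.append_eq_nil_iff, hnil, List.range_eq_nil]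
    tauto
  · refine List.forall_mem_append.2 ⟨hconst _ _ fun i hi => ?_, hA⟩
    simp only [List.mem_range] at hi
    simp; omega
  · rw [Ne, List.append_eq_nil_iff, hnil, List.range'_eq_nil_iff]
    omega
  · refine List.forall_mem_append.2 ⟨hB, hconst _ _ fun i hi => ?_⟩
    simp only [List.mem_range'_1] at hi
    simp; omega
  · refine hconst _ _ fun i hi => ?_
    simp only [List.mem_range'_1] at hi
    simp; omega

theorem perm_range_of_mem_permList {p : List ℕ} (hp : p ∈ permList H n) :
    p.Perm (List.range n) := by
  obtain ⟨i, hi, q, hq, rfl⟩ : ∃ i < n, ∃ q ∈ stops H n i, rotInsert n i q = p := by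
    simpa [permList] using hp
  exact rotInsert_perm_range (by have := le_of_mem_stops hq; omega)

theorem rotInsert_zero_mem_permList {i : ℕ} (hi : i < n) : rotInsert n i 0 ∈ permList H n :=
  List.mem_flatMap.2 ⟨i, List.mem_range.2 hi, List.mem_map_of_mem (zero_mem_stops i)⟩

theorem pattern11Count_filter_permList (hab : a < b) (hbn : b < n) :
    pattern11Count ((permList H n).flatten.filter fun z => decide (z = a ∨ z = b)) =
      switches (orientSeq H n a b) := by
  rw [← pattern11Count_flatMap_pairWord (Nat.ne_of_lt hab), List.filter_flatten, orientSeq,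
    permList, List.flatMap_def (l := List.flatMap _ _), List.map_flatMap, List.map_flatMap]
  refine congrArg (fun L => pattern11Count (List.flatten L)) (List.flatMap_congr fun i _ => ?_)
  rw [List.map_map, List.map_map]
  exact List.map_congr_left fun p _ => filter_rotInsert hab hbn

theorem adj_iff_pattern11Count_filter_permList_le_two {x y : ℕ} (hx : x < n) (hy : y < n)
    (hxy : x ≠ y) :
    H.Adj x y ↔
      pattern11Count ((permList H n).flatten.filter fun z => decide (z = x ∨ z = y)) ≤ 2 := by
  wlog hlt : x < y generalizing x y
  · have hcomm : (fun z => decide (z = x ∨ z = y)) = fun z => decide (z = y ∨ z = x) := by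
      simp only [or_comm]
    rw [H.adj_comm, hcomm]
    exact this hy hx hxy.symm (by omega)
  rw [pattern11Count_filter_permList hlt hy, switches_orientSeq hlt hy]
  split_ifs <;> simp_all

theorem mem_flatten_permList_iff {a : ℕ} : a ∈ (permList H n).flatten ↔ a < n := by
  refine ⟨fun ha => ?_, fun ha =>
    List.mem_flatten.2 ⟨_, rotInsert_zero_mem_permList ha, by simp [rotInsert_zero]⟩⟩
  obtain ⟨p, hp, hap⟩ := List.mem_flatten.1 ha
  exact List.mem_range.1 ((perm_range_of_mem_permList hp).subset hap)

end TwoElevenRep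

open TwoElevenRep in
/-- every graph `G` on `n ≥ 2` vertices has a 2-11-representant that is a
concatenation of at most `n² - n + 2` permutations of the vertex set, such that every
vertex is the first letter of one of the permutations. In particular, every graph is
permutationally 2-11-representable. -/
theorem all_graphs_perm_two_eleven {V : Type*} [DecidableEq V] [Fintype V]
    (G : SimpleGraph V) (hn : 2 ≤ Fintype.card V) :
    ∃ ps : List (List V), ps ≠ [] ∧
      (∀ p ∈ ps, ∀ v : V, p.count v = 1) ∧
      ps.length ≤ Fintype.card V ^ 2 + 2 - Fintype.card V ∧
      (∀ i : V, ∃ p ∈ ps, p.head? = some i) ∧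
      IsK11Rep G 2 ps.flatten := by
  classical
  have : Nonempty V := Fintype.card_pos_iff.1 (by omega)
  obtain ⟨f, hf⟩ := exists_bijOn_Iio_card V
  refine ⟨(permList (G.comap f) (Fintype.card V)).map (List.map f), ?_, ?_, ?_, ?_, ?_⟩
  · exact List.ne_nil_of_mem (List.mem_map_of_mem (rotInsert_zero_mem_permList (by omega : 0 < _)))
  · simp only [List.mem_map]
    rintro _ ⟨p, hp, rfl⟩
    exact count_map_eq_one_of_perm_range hf (perm_range_of_mem_permList hp)
  · rw [List.length_map]
    exact length_permList_le hn
  · intro v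
    obtain ⟨i, hi, rfl⟩ := hf.surjOn (Set.mem_univ v)
    exact ⟨_, List.mem_map_of_mem (rotInsert_zero_mem_permList hi), by simp [rotInsert_zero]⟩
  · rw [← List.map_flatten]
    exact isK11Rep_map_of_bijOn hf (fun a => mem_flatten_permList_iff) fun x hx y hy hxy =>
      adj_iff_pattern11Count_filter_permList_le_two (H := G.comap f) hx hy hxy
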